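/- arXiv:1708.04934 — 4 statements merged into one kernel-verified Lean document; each statement's English description precedes it below -/
import Mathlib

section
/- Let G be a real 4×4 symmetric invertible matrix and F a real 4×4 antisymmetric matrix. Then det(G + F) = det G · (1 − (1/2)·tr((G⁻¹F)²)) + det F. -/
/-!
Put `M = G⁻¹ F`, so that `G + F = G (1 + M)` and `det G · det M = det F`. Since `G⁻¹` is symmetric
and `F` antisymmetric, `Mᵀ = -F G⁻¹`, and by cyclicity of the trace `tr (M ^ k) = -tr (M ^ k)` for
odd `k`. In the expansion of `det (1 + M)` in power sums of a `4 × 4` matrix only the terms in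
`tr (M ^ 2)` and `det M` survive.
-/

open Matrix

namespace Matrix

variable {n R : Type*} [Fintype n] [DecidableEq n]

theorem trace_mul_pow_comm [CommSemiring R] (A B : Matrix n n R) (k : ℕ) :
    trace ((A * B) ^ k) = trace ((B * A) ^ k) := by
  cases k with
  | zero => rfl
  | succ k => rw [pow_succ', Matrix.mul_assoc, trace_mul_comm, Matrix.mul_assoc, mul_pow_mul,
      ← Matrix.mul_assoc, ← pow_succ']

theorem trace_mul_pow_eq_zero_of_isSymm [CommRing R] [NoZeroDivisors R] [CharZero R]
    {A F : Matrix n n R} (hA : A.IsSymm) (hF : Fᵀ = -F) {k : ℕ} (hk : Odd k) :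
    trace ((A * F) ^ k) = 0 := by
  refine CharZero.eq_neg_self_iff.mp ?_
  calc trace ((A * F) ^ k) = trace (((A * F) ^ k)ᵀ) := (trace_transpose _).symm
    _ = trace ((-(F * A)) ^ k) := by rw [transpose_pow, transpose_mul, hF, hA.eq, neg_mul]
    _ = -trace ((A * F) ^ k) := by rw [hk.neg_pow, trace_neg, trace_mul_pow_comm]

/-- `det (1 + M) = 1 + e₁ + e₂ + e₃ + e₄`, with the elementary symmetric functions `eᵢ` of the
eigenvalues expressed in power sums by Newton's identities, cleared of denominators. -/
theorem det_one_add_fin_four [CommRing R] (M : Matrix (Fin 4) (Fin 4) R) :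
    6 * (1 + M).det = 6 + 6 * M.trace + 3 * (M.trace ^ 2 - (M ^ 2).trace)
      + (M.trace ^ 3 - 3 * M.trace * (M ^ 2).trace + 2 * (M ^ 3).trace) + 6 * M.det := by
  simp only [det_succ_row_zero, Fin.sum_univ_succ, Fin.sum_univ_zero, det_unique, trace, diag,
    pow_succ, pow_zero, Matrix.one_mul, mul_apply, Matrix.add_apply, submatrix_apply]
  simp [one_apply, Fin.succAbove, Fin.lt_def]
  ring

end Matrix

/-- Born–Infeld determinant expansion, algebraic core (eq. (14)): for a real
4×4 symmetric invertible matrix `G` and antisymmetric matrix `F`,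
`det (G + F) = det G · (1 − ½ tr((G⁻¹F)²)) + det F`. -/
theorem det_add_of_symm_antisymm
    (G F : Matrix (Fin 4) (Fin 4) ℝ)
    (hGsymm : Gᵀ = G) (hGinv : IsUnit G.det) (hFanti : Fᵀ = -F) :
    (G + F).det = G.det * (1 - (1 / 2) * ((G⁻¹ * F) ^ 2).trace) + F.det := by
  set M := G⁻¹ * F
  have hGinv_symm : G⁻¹.IsSymm := IsSymm.inv hGsymm
  have htrace_one : M.trace = 0 := by
    simpa using trace_mul_pow_eq_zero_of_isSymm hGinv_symm hFanti odd_one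
  have htrace_three : (M ^ 3).trace = 0 :=
    trace_mul_pow_eq_zero_of_isSymm hGinv_symm hFanti (by decide)
  have hfactor : G + F = G * (1 + M) := by
    rw [Matrix.mul_add, Matrix.mul_one, ← Matrix.mul_assoc, mul_nonsing_inv G hGinv,
      Matrix.one_mul]
  have hdet : G.det * M.det = F.det := by
    rw [← det_mul, ← Matrix.mul_assoc, mul_nonsing_inv G hGinv, Matrix.one_mul]
  have hexpand := det_one_add_fin_four M
  rw [htrace_one, htrace_three] at hexpand
  rw [hfactor, det_mul]
  linear_combination G.det / 6 * hexpand + hdet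
end

section
/- Let K : ℝ⁴ → Matrix (Fin 4) (Fin 4) ℝ be differentiable with K(x) invertible for every x, and let Γ : Fin 4 → Fin 4 → Fin 4 → (ℝ⁴ → ℝ) be connection-coefficient functions. Suppose the compatibility condition ∂_α K^μ_ν + ∑_ρ Γ^μ_{ρα} K^ρ_ν − ∑_ρ Γ^ρ_{να} K^μ_ρ = ∑_ρ K^μ_ρ (Γ^ρ_{αν} − Γ^ρ_{να}) holds at every point for all indices μ, ν, α. Then for every α and every point, ∂_α ln|det K| = ∑_ν (Γ^ν_{αν} − Γ^ν_{να}); in particular the trace of the torsion tensor T_α := ∑_ν (Γ^ν_{αν} − Γ^ν_{να}) is the gradient of the scalar field ln|det K|, and if K is twice continuously differentiable then ∂_β T_α = ∂_α T_β for all α, β. -/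
/-! Jacobi's formula gives `∂_α ln|det K| = tr (∂_α K · K⁻¹)`. In matrix form, with
`(Γ_α)^μ_ρ = Γ^μ_{ρα}` and `(T_α)^ρ_ν = Γ^ρ_{αν} − Γ^ρ_{να}`, the compatibility condition reads
`∂_α K + [Γ_α, K] = K T_α`. Multiplying on the right by `K⁻¹` and taking traces, the commutator
term drops out because the trace is invariant under conjugation, leaving `tr T_α`, which is the
torsion trace. Closedness is then the symmetry of the second derivative of the `C²` function
`ln|det K|`. -/

open Matrix

/-- The partial derivative of `f : ℝ⁴ → ℝ` in the `α`-th coordinate direction. -/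
noncomputable def pd (α : Fin 4) (f : (Fin 4 → ℝ) → ℝ) (x : Fin 4 → ℝ) : ℝ :=
  fderiv ℝ f x (Pi.single α 1)

namespace Matrix
variable {n : Type*} [Fintype n] [DecidableEq n]

theorem det_updateRow_eq_sum_adjugate_mul {R : Type*} [CommRing R] (A : Matrix n n R) (i : n)
    (b : n → R) : (A.updateRow i b).det = ∑ k, A.adjugate k i * b k := by
  rw [← cramer_transpose_apply, cramer_eq_adjugate_mulVec, ← adjugate_transpose]
  rfl

theorem trace_mul_nonsing_inv_of_add_commutator_eq {R : Type*} [CommRing R]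
    {A D G T : Matrix n n R} (hA : IsUnit A.det) (h : D + (G * A - A * G) = A * T) :
    trace (D * A⁻¹) = trace T := by
  have hA' : IsUnit A := (isUnit_iff_isUnit_det A).2 hA
  rw [eq_sub_of_add_eq h, sub_mul, sub_mul, trace_sub, trace_sub, trace_conj hA',
    trace_conj hA', mul_nonsing_inv_cancel_right _ _ hA, sub_self, sub_zero]

variable (n) in
noncomputable def detContinuousMultilinearMap (𝕜 : Type*) [NontriviallyNormedField 𝕜] :
    ContinuousMultilinearMap 𝕜 (fun _ : n => n → 𝕜) 𝕜 :=
  ⟨(detRowAlternating : (n → 𝕜) [⋀^n]→ₗ[𝕜] 𝕜).toMultilinearMap, continuous_id.matrix_det⟩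

end Matrix

section Determinant
variable {n : Type*} [Fintype n] [DecidableEq n] {𝕜 : Type*} [NontriviallyNormedField 𝕜]
  {E : Type*} [NormedAddCommGroup E] [NormedSpace 𝕜 E]

theorem HasFDerivAt.matrix_det {K : E → Matrix n n 𝕜} {K' : n → n → E →L[𝕜] 𝕜} {x : E}
    (hK : ∀ i j, HasFDerivAt (fun y => K y i j) (K' i j) x) :
    HasFDerivAt (fun y => (K y).det) (∑ i, ∑ j, (K x).adjugate j i • K' i j) x := by
  have hrows : HasFDerivAt (fun y i j => K y i j)
      (ContinuousLinearMap.pi fun i => ContinuousLinearMap.pi (K' i)) x :=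
    hasFDerivAt_pi.2 fun i => hasFDerivAt_pi.2 (hK i)
  refine (((detContinuousMultilinearMap n 𝕜).hasFDerivAt _).comp x hrows).congr_fderiv ?_
  ext v
  simp only [ContinuousLinearMap.comp_apply, ContinuousMultilinearMap.linearDeriv_apply,
    _root_.sum_apply, _root_.smul_apply, smul_eq_mul]
  exact Finset.sum_congr rfl fun i _ => det_updateRow_eq_sum_adjugate_mul (K x) i _

theorem ContDiff.matrix_det {K : E → Matrix n n 𝕜} {k : WithTop ℕ∞}
    (hK : ∀ i j, ContDiff 𝕜 k fun y => K y i j) : ContDiff 𝕜 k fun y => (K y).det :=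
  (detContinuousMultilinearMap n 𝕜).contDiff.comp (contDiff_pi.2 fun i => contDiff_pi.2 (hK i))

end Determinant

theorem fderiv_log_abs_det_apply {n E : Type*} [Fintype n] [DecidableEq n] [NormedAddCommGroup E]
    [NormedSpace ℝ E] {K : E → Matrix n n ℝ} {x : E}
    (hK : ∀ i j, DifferentiableAt ℝ (fun y => K y i j) x) (hdet : IsUnit (K x).det) (v : E) :
    fderiv ℝ (fun y => Real.log |(K y).det|) x v
      = trace (of (fun i j => fderiv ℝ (fun y => K y i j) x v) * (K x)⁻¹) := by
  have hlogdet := (HasFDerivAt.matrix_det fun i j => (hK i j).hasFDerivAt).log hdet.ne_zero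
  simp only [Real.log_abs]
  rw [hlogdet.fderiv]
  simp only [_root_.smul_apply, _root_.sum_apply, smul_eq_mul, trace, diag, mul_apply, of_apply,
    inv_def, Ring.inverse_eq_inv', Matrix.smul_apply, Finset.mul_sum]
  exact Finset.sum_congr rfl fun i _ => Finset.sum_congr rfl fun j _ => by ring

theorem ContDiffAt.fderiv_fderiv_apply_comm {𝕜 E F : Type*} [RCLike 𝕜] [NormedAddCommGroup E]
    [NormedSpace 𝕜 E] [NormedAddCommGroup F] [NormedSpace 𝕜 F] {f : E → F} {x : E}
    (hf : ContDiffAt 𝕜 2 f x) (v w : E) :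
    fderiv 𝕜 (fun y => fderiv 𝕜 f y v) x w = fderiv 𝕜 (fun y => fderiv 𝕜 f y w) x v := by
  have hf' : DifferentiableAt 𝕜 (fderiv 𝕜 f) x :=
    (hf.fderiv_right (m := 1) (by norm_num)).differentiableAt one_ne_zero
  rw [fderiv_clm_apply hf' (differentiableAt_const v),
    fderiv_clm_apply hf' (differentiableAt_const w)]
  simpa using hf.isSymmSndFDerivAt (by simp) w v

/-- Equations (4), (6), (8), (10) of the paper: the generalized compatibility
condition `∇K = KT` (with torsion `T^ρ_{να} = Γ^ρ_{αν} − Γ^ρ_{να}`), for an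
everywhere-invertible differentiable fundamental tensor `K`, forces
`∂_α ln|det K| = ∑_ν (Γ^ν_{αν} − Γ^ν_{να})`; in particular the torsion trace
`T_α` is the gradient of the scalar `ln|det K|`, and if `K` is `C²` then the
1-form `T_α` is closed: `∂_β T_α = ∂_α T_β`. -/
theorem torsion_trace_is_gradient
    (K : (Fin 4 → ℝ) → Matrix (Fin 4) (Fin 4) ℝ)
    (Γ : Fin 4 → Fin 4 → Fin 4 → (Fin 4 → ℝ) → ℝ)
    (hdiff : ∀ μ ν, Differentiable ℝ (fun x => K x μ ν))
    (hinv : ∀ x, IsUnit (K x).det)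
    (hcomp : ∀ x (μ ν α : Fin 4),
      pd α (fun y => K y μ ν) x
        + (∑ ρ, Γ μ ρ α x * K x ρ ν) - (∑ ρ, Γ ρ ν α x * K x μ ρ)
      = ∑ ρ, K x μ ρ * (Γ ρ α ν x - Γ ρ ν α x)) :
    (∀ (α : Fin 4) (x : Fin 4 → ℝ),
      pd α (fun y => Real.log |(K y).det|) x = ∑ ν, (Γ ν α ν x - Γ ν ν α x)) ∧
    ((∀ μ ν, ContDiff ℝ 2 (fun x => K x μ ν)) →
      ∀ (α β : Fin 4) (x : Fin 4 → ℝ),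
        pd β (fun y => ∑ ν, (Γ ν α ν y - Γ ν ν α y)) x
          = pd α (fun y => ∑ ν, (Γ ν β ν y - Γ ν ν β y)) x) := by
  have hgrad : ∀ α x, pd α (fun y => Real.log |(K y).det|) x = ∑ ν, (Γ ν α ν x - Γ ν ν α x) := by
    intro α x
    have hmatrix : of (fun μ ν => pd α (fun y => K y μ ν) x)
        + (of (fun μ ρ => Γ μ ρ α x) * K x - K x * of (fun μ ρ => Γ μ ρ α x))
        = K x * of (fun ρ ν => Γ ρ α ν x - Γ ρ ν α x) := by
      ext μ ν
      simp only [Matrix.add_apply, Matrix.sub_apply, mul_apply, of_apply]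
      rw [← hcomp x μ ν α]
      simp only [mul_comm (K x μ _)]
      ring
    rw [pd, fderiv_log_abs_det_apply (fun μ ν => (hdiff μ ν).differentiableAt) (hinv x)]
    exact trace_mul_nonsing_inv_of_add_commutator_eq (hinv x) hmatrix
  refine ⟨hgrad, fun hC2 α β x => ?_⟩
  have hlog : ContDiff ℝ 2 fun y => Real.log |(K y).det| := by
    simp only [Real.log_abs]
    exact (ContDiff.matrix_det hC2).log fun y => (hinv y).ne_zero
  have htorsion : ∀ α, (fun y => ∑ ν, (Γ ν α ν y - Γ ν ν α y))
      = fun y => fderiv ℝ (fun y => Real.log |(K y).det|) y (Pi.single α 1) :=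
    fun α => funext fun y => (hgrad α y).symm
  simp only [pd, htorsion]
  exact hlog.contDiffAt.fderiv_fderiv_apply_comm _ _
end

section
/- Let h, E, B, j ∈ ℝ³ with h·B ≠ 0, and suppose (h·B) E = (E·B) h − j × B. Then h × E = −j + ((h·j)/(h·B)) B. -/
/-!
Cross the force balance with `h`: the term `(E·B) h` drops out because `h × h = 0`, and the
BAC–CAB rule turns `h × (j × B)` into `(h·B) j − (h·j) B`. This leaves
`(h·B) (h × E) = (h·j) B − (h·B) j`, which is divided by `h·B`.
-/

open Matrix

theorem smul_cross_eq_of_smul_eq_smul_sub_cross {R : Type*} [CommRing R] (h E B j : Fin 3 → R)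
    (c a : R) (hE : c • E = a • h - j ⨯₃ B) :
    c • (h ⨯₃ E) = (h ⬝ᵥ j) • B - (h ⬝ᵥ B) • j := by
  calc c • (h ⨯₃ E) = h ⨯₃ (c • E) := (LinearMap.map_smul _ c E).symm
    _ = a • (h ⨯₃ h) - h ⨯₃ (j ⨯₃ B) := by rw [hE, map_sub, LinearMap.map_smul]
    _ = (h ⬝ᵥ j) • B - (h ⬝ᵥ B) • j := by
      rw [cross_self, smul_zero, zero_sub, cross_cross_eq_smul_sub_smul', dotProduct_comm j h,
        neg_sub]

/-- Elimination of the electric field from the generalized Lorentz-force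
relation (eqs. (82), (84)–(85)): if `h·B ≠ 0` and
`(h·B) E = (E·B) h − j × B`, then `h × E = −j + ((h·j)/(h·B)) B`. -/
theorem electric_field_elimination
    (h E B j : Fin 3 → ℝ) (hhB : h ⬝ᵥ B ≠ 0)
    (hforce : (h ⬝ᵥ B) • E = (E ⬝ᵥ B) • h - j ⨯₃ B) :
    h ⨯₃ E = -j + ((h ⬝ᵥ j) / (h ⬝ᵥ B)) • B := by
  have hcross := smul_cross_eq_of_smul_eq_smul_sub_cross h E B j _ _ hforce
  calc h ⨯₃ E = (h ⬝ᵥ B)⁻¹ • ((h ⬝ᵥ B) • (h ⨯₃ E)) := (inv_smul_smul₀ hhB _).symm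
    _ = -j + ((h ⬝ᵥ j) / (h ⬝ᵥ B)) • B := by
      rw [hcross, smul_sub, inv_smul_smul₀ hhB, smul_smul, inv_mul_eq_div, sub_eq_neg_add]
end

section
/- Let E, B : ℝ × ℝ³ → ℝ³ be twice continuously differentiable time-dependent vector fields and h⁰ ∈ ℝ a constant, and suppose at every point: div B = 0, ∂_t B = −curl E, and ∂_t E − curl B = h⁰ B (spatial divergence and curl taken at fixed time, with div F = ∑_i ∂_i F_i and (curl F)_i = ∑_{j,k} ε_{ijk} ∂_j F_k). Then at every point ∂²_t B − ΔB + h⁰ (curl B) = 0, where Δ is the spatial vector Laplacian applied componentwise. -/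
/-!
Differentiating Faraday's law in time and commuting `∂_t` with the spatial curl (symmetry of
second derivatives of `C²` fields), Ampère's law turns `∂²_t B` into `-curl (h⁰ B + curl B)`.
The identity `curl curl = grad div - Δ`, which is the contracted ε–δ identity combined with the
same symmetry, and `div B = 0` then give `∂²_t B = -h⁰ curl B + ΔB`.
-/

open Matrix

/-- The 3-dimensional Levi-Civita symbol with `ε₀₁₂ = 1`. -/
noncomputable def eps3 (i j k : Fin 3) : ℝ :=
  (((j : ℝ) - i) * ((k : ℝ) - i) * ((k : ℝ) - j)) / 2

/-- Time derivative of `f : ℝ × ℝ³ → ℝ` (derivative in the direction `(1,0)`). -/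
noncomputable def pdT (f : ℝ × (Fin 3 → ℝ) → ℝ) (p : ℝ × (Fin 3 → ℝ)) : ℝ :=
  fderiv ℝ f p (1, 0)

/-- Spatial partial derivative of `f : ℝ × ℝ³ → ℝ` in the `j`-th direction. -/
noncomputable def pdX (j : Fin 3) (f : ℝ × (Fin 3 → ℝ) → ℝ)
    (p : ℝ × (Fin 3 → ℝ)) : ℝ :=
  fderiv ℝ f p (0, Pi.single j 1)

/-- Spatial divergence of a time-dependent vector field on ℝ³. -/
noncomputable def divX (F : ℝ × (Fin 3 → ℝ) → (Fin 3 → ℝ))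
    (p : ℝ × (Fin 3 → ℝ)) : ℝ :=
  ∑ i, pdX i (fun q => F q i) p

/-- Spatial curl of a time-dependent vector field on ℝ³. -/
noncomputable def curlX (F : ℝ × (Fin 3 → ℝ) → (Fin 3 → ℝ))
    (p : ℝ × (Fin 3 → ℝ)) (i : Fin 3) : ℝ :=
  ∑ j, ∑ k, eps3 i j k * pdX j (fun q => F q k) p

/-- Spatial componentwise vector Laplacian of a time-dependent vector field. -/
noncomputable def lapX (F : ℝ × (Fin 3 → ℝ) → (Fin 3 → ℝ))
    (p : ℝ × (Fin 3 → ℝ)) (i : Fin 3) : ℝ :=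
  ∑ j, pdX j (fun q => pdX j (fun r => F r i) q) p

section DirectionalDerivative

variable {V W : Type*} [NormedAddCommGroup V] [NormedSpace ℝ V]
  [NormedAddCommGroup W] [NormedSpace ℝ W]

theorem differentiable_fderiv_apply {f : V → W} (hf : ContDiff ℝ 2 f) (v : V) :
    Differentiable ℝ (fun q => fderiv ℝ f q v) :=
  ((hf.fderiv_right (m := 1) (by norm_num)).clm_apply contDiff_const).differentiable
    (by norm_num)

theorem fderiv_fderiv_apply_comm {f : V → W} (hf : ContDiff ℝ 2 f) (p v w : V) :
    fderiv ℝ (fun q => fderiv ℝ f q w) p v = fderiv ℝ (fun q => fderiv ℝ f q v) p w := by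
  have hd : DifferentiableAt ℝ (fderiv ℝ f) p :=
    (hf.fderiv_right (m := 1) (by norm_num)).differentiable (by norm_num) p
  have hsymm : IsSymmSndFDerivAt ℝ f p :=
    hf.contDiffAt.isSymmSndFDerivAt (by simp [minSmoothness_of_isRCLikeNormedField])
  rw [fderiv_clm_apply hd (differentiableAt_const _),
    fderiv_clm_apply hd (differentiableAt_const _)]
  simpa using hsymm v w

end DirectionalDerivative

/-- The contracted ε–δ identity `∑ₖ ε_ijk ε_klm = δ_il δ_jm - δ_im δ_jl`. -/
theorem sum_eps3_mul_sum_eps3 (X : Fin 3 → Fin 3 → Fin 3 → ℝ) (i : Fin 3) :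
    ∑ j, ∑ k, eps3 i j k * ∑ l, ∑ m, eps3 k l m * X j l m
      = ∑ j, X j i j - ∑ j, X j j i := by
  fin_cases i <;> simp [Fin.sum_univ_three, eps3] <;> ring

section VectorCalculus

variable {F G : ℝ × (Fin 3 → ℝ) → (Fin 3 → ℝ)}

theorem differentiable_curlX (hF : ∀ k, ContDiff ℝ 2 (fun q => F q k)) (i : Fin 3) :
    Differentiable ℝ (fun q => curlX F q i) :=
  Differentiable.fun_sum fun _ _ => Differentiable.fun_sum fun k _ =>
    (differentiable_fderiv_apply (hF k) _).const_mul _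

theorem fderiv_curlX_apply (hF : ∀ k, ContDiff ℝ 2 (fun q => F q k))
    (p v : ℝ × (Fin 3 → ℝ)) (i : Fin 3) :
    fderiv ℝ (fun q => curlX F q i) p v
      = curlX (fun q k => fderiv ℝ (fun r => F r k) q v) p i := by
  have hd : ∀ j k, Differentiable ℝ (fun q => pdX j (fun r => F r k) q) :=
    fun j k => differentiable_fderiv_apply (hF k) _
  simp (disch := fun_prop) only [curlX, fderiv_fun_sum, fderiv_const_mul, _root_.sum_apply,
    _root_.smul_apply, smul_eq_mul]
  refine Finset.sum_congr rfl fun j _ => Finset.sum_congr rfl fun k _ => ?_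
  exact congrArg _ (fderiv_fderiv_apply_comm (hF k) p v _)

theorem curlX_add {p : ℝ × (Fin 3 → ℝ)} (hF : ∀ k, DifferentiableAt ℝ (fun q => F q k) p)
    (hG : ∀ k, DifferentiableAt ℝ (fun q => G q k) p) (i : Fin 3) :
    curlX (F + G) p i = curlX F p i + curlX G p i := by
  simp [curlX, pdX, fderiv_fun_add, hF, hG, mul_add, Finset.sum_add_distrib]

theorem curlX_smul {p : ℝ × (Fin 3 → ℝ)}
    (hF : ∀ k, DifferentiableAt ℝ (fun q => F q k) p) (c : ℝ) (i : Fin 3) :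
    curlX (c • F) p i = c * curlX F p i := by
  simp [curlX, pdX, fderiv_const_mul, hF, Finset.mul_sum, mul_left_comm]

theorem curlX_curlX (hF : ∀ k, ContDiff ℝ 2 (fun q => F q k)) (p : ℝ × (Fin 3 → ℝ))
    (i : Fin 3) : curlX (curlX F) p i = pdX i (fun q => divX F q) p - lapX F p i := by
  have hcurl : ∀ j k, pdX j (fun q => curlX F q k) p
      = ∑ l, ∑ m, eps3 k l m * pdX l (fun q => pdX j (fun r => F r m) q) p :=
    fun j k => fderiv_curlX_apply hF p _ k
  have hdiv : pdX i (fun q => divX F q) p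
      = ∑ j, pdX i (fun q => pdX j (fun r => F r j) q) p := by
    have hd : ∀ j, Differentiable ℝ (fun q => pdX j (fun r => F r j) q) :=
      fun j => differentiable_fderiv_apply (hF j) _
    change fderiv ℝ (fun q => ∑ j, pdX j (fun r => F r j) q) p _ = _
    rw [fderiv_fun_sum fun j _ => (hd j).differentiableAt, _root_.sum_apply]
    rfl
  rw [curlX]
  simp only [hcurl]
  rw [sum_eps3_mul_sum_eps3, hdiv]
  rfl

end VectorCalculus

/-- The chiral wave equation for the magnetic field: if `div B = 0`,
`∂_t B = −curl E` and `∂_t E − curl B = h⁰ B` for a constant `h⁰`, then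
`∂²_t B − ΔB + h⁰ (curl B) = 0`. -/
theorem chiral_magnetic_wave_equation
    (E B : ℝ × (Fin 3 → ℝ) → (Fin 3 → ℝ)) (h0 : ℝ)
    (hE : ∀ i, ContDiff ℝ 2 (fun p => E p i))
    (hB : ∀ i, ContDiff ℝ 2 (fun p => B p i))
    (hdivB : ∀ p, divX B p = 0)
    (hfaraday : ∀ p i, pdT (fun q => B q i) p = -curlX E p i)
    (hampere : ∀ p i, pdT (fun q => E q i) p - curlX B p i = h0 * B p i) :
    ∀ p i, pdT (fun q => pdT (fun r => B r i) q) p - lapX B p i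
      + h0 * curlX B p i = 0 := by
  intro p i
  have hBd : ∀ k, DifferentiableAt ℝ (fun q => B q k) p :=
    fun k => (hB k).differentiable (by norm_num) p
  have hdtE : (fun q k => pdT (fun r => E r k) q) = h0 • B + curlX B := by
    funext q k
    simp only [Pi.add_apply, Pi.smul_apply, smul_eq_mul]
    linarith [hampere q k]
  have hgradDivB : pdX i (fun q => divX B q) p = 0 := by
    simp [hdivB, pdX]
  have hdtdtB : pdT (fun q => pdT (fun r => B r i) q) p
      = -(h0 * curlX B p i) - curlX (curlX B) p i :=
    calc pdT (fun q => pdT (fun r => B r i) q) p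
        = -pdT (fun q => curlX E q i) p := by
          rw [pdT, funext fun q => hfaraday q i, fderiv_fun_neg]
          rfl
      _ = -curlX (h0 • B + curlX B) p i := by
          rw [pdT, fderiv_curlX_apply hE, ← hdtE]
          rfl
      _ = -(h0 * curlX B p i) - curlX (curlX B) p i := by
          rw [curlX_add (F := h0 • B) (fun k => (hBd k).const_mul h0)
            (fun k => differentiable_curlX hB k p), curlX_smul hBd]
          ring
  rw [hdtdtB, curlX_curlX hB, hgradDivB]
  ring
end
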